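/- (Weight-zero compatibility of the Cartier operator with the p-saturated filtration, from the proof of Lemma lem:CC- in §10.) Let n ≥ 1 and r ≥ 2. If a ∈ W_{n+1}(L) satisfies F(a) ∈ Fil^p_r Wₙ(L), then R(a) ∈ Fil^p_r Wₙ(L). Consequently the Cartier operator C : F(W_{n+1}(L)) → Wₙ(L), defined by C(F(a)) = R(a) (well defined since F(a) = F(b) forces a_i = b_i for 0 ≤ i ≤ n−1 in a field of characteristic p), maps F(W_{n+1}(L)) ∩ Fil^p_r Wₙ(L) into Fil^p_r Wₙ(L). -/

import Mathlib

noncomputable section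

open scoped Classical

/-- A discretely valued field: a field `L` together with a normalized additive valuation
`v : L → ℤ ∪ {∞}` and a uniformizer `z` (so `v z = 1`).  The valuation ring is
`O = {a : L | 0 ≤ v a}`, with maximal ideal `𝔪 = {a : L | 1 ≤ v a}`. -/
structure DVField (L : Type) [Field L] : Type where
  v : L → WithTop ℤ
  z : L
  v_top : ∀ a : L, v a = ⊤ ↔ a = 0
  v_mul : ∀ a b : L, v (a * b) = v a + v b
  v_add : ∀ a b : L, min (v a) (v b) ≤ v (a + b)
  v_z : v z = 1

namespace DVField

variable {L : Type} [Field L]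

/-- `Wₙ(O) ⊆ Wₙ(L)`: the truncated Witt vectors all of whose components are integral. -/
def WO (D : DVField L) (p n : ℕ) : Set (TruncatedWittVector p n L) :=
  {x | ∀ i : Fin n, 0 ≤ D.v (x.coeff i)}

/-- The Brylinski–Kato filtration
`fil^log_r Wₙ(L) = {(a₀, …, a_{n-1}) | p^{n-1-i} · v(aᵢ) ≥ -r for all i}`. -/
def filLog (D : DVField L) (p r n : ℕ) : Set (TruncatedWittVector p n L) :=
  {x | ∀ i : Fin n, (↑(-(r : ℤ)) : WithTop ℤ) ≤ p ^ (n - 1 - (i : ℕ)) • D.v (x.coeff i)}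

end DVField

/-- The Verschiebung `V : Wₙ(L) → W_{n+1}(L)`, shifting components. -/
def wV {p : ℕ} {L : Type} [Field L] {n : ℕ} (x : TruncatedWittVector p n L) :
    TruncatedWittVector p (n + 1) L :=
  TruncatedWittVector.mk p fun i =>
    if h : (i : ℕ) = 0 then 0 else x.coeff ⟨(i : ℕ) - 1, by have := i.isLt; omega⟩

/-- The iterated Verschiebung `V^{n-m} : W_m(L) → Wₙ(L)` (for `m ≤ n`), given by shifting
components by `n - m`. -/
def wVit {p : ℕ} {L : Type} [Field L] {m n : ℕ} (x : TruncatedWittVector p m L) :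
    TruncatedWittVector p n L :=
  TruncatedWittVector.mk p fun i =>
    if h : n - m ≤ (i : ℕ) ∧ (i : ℕ) - (n - m) < m then x.coeff ⟨(i : ℕ) - (n - m), h.2⟩ else 0

/-- The restriction `R : W_{n+1}(L) → Wₙ(L)`, dropping the last component. -/
def wR {p : ℕ} {L : Type} [Field L] {n : ℕ} (x : TruncatedWittVector p (n + 1) L) :
    TruncatedWittVector p n L :=
  TruncatedWittVector.mk p fun i => x.coeff i.castSucc

/-- The iterated restriction `R^{m-n} : W_m(L) → Wₙ(L)` (for `n ≤ m`), keeping the first `n`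
components. -/
def wRes {p : ℕ} {L : Type} [Field L] {m n : ℕ} (x : TruncatedWittVector p m L) :
    TruncatedWittVector p n L :=
  TruncatedWittVector.mk p fun i => if h : (i : ℕ) < m then x.coeff ⟨(i : ℕ), h⟩ else 0

/-- The Frobenius `F : W_{n+1}(L) → Wₙ(L)` in characteristic `p`:
componentwise `p`-th power followed by restriction. -/
def wF {p : ℕ} {L : Type} [Field L] {n : ℕ} (x : TruncatedWittVector p (n + 1) L) :
    TruncatedWittVector p n L :=
  TruncatedWittVector.mk p fun i => x.coeff i.castSucc ^ p

/-- The Teichmüller lift `[a] = (a, 0, …, 0)`. -/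
def wT (p : ℕ) {L : Type} [Field L] (n : ℕ) (a : L) : TruncatedWittVector p n L :=
  TruncatedWittVector.mk p fun i => if (i : ℕ) = 0 then a else 0

/-- The map `p̲ : Wₙ(L) → W_{n+1}(L)`: lift to length `n+1` (by appending a zero component)
and multiply by `p`. -/
def wP {p : ℕ} [Fact p.Prime] {L : Type} [Field L] {n : ℕ} (x : TruncatedWittVector p n L) :
    TruncatedWittVector p (n + 1) L :=
  p • (wRes x : TruncatedWittVector p (n + 1) L)

namespace DVField

variable {L : Type} [Field L]

/-- The Kato–Matsuda filtration
`fil_r Wₙ(L) = fil^log_{r-1} Wₙ(L) + V^{n-m}(fil^log_r W_m(L))` where `m = min(v_p(r), n)`,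
and `fil_0 Wₙ(L) = Wₙ(O)`. -/
def filKM (D : DVField L) (p : ℕ) [Fact p.Prime] (r n : ℕ) :
    Set (TruncatedWittVector p n L) :=
  if r = 0 then D.WO p n
  else {x | ∃ a ∈ D.filLog p (r - 1) n,
    ∃ b ∈ D.filLog p r (min (padicValNat p r) n), x = a + wVit b}

/-- The `p`-saturation `Fil^p_r Wₙ(L) = Σ_{s=0}^{n-1} p^s · fil_{r·p^s} Wₙ(L)`. -/
def FilP (D : DVField L) (p : ℕ) [Fact p.Prime] (r n : ℕ) :
    Set (TruncatedWittVector p n L) :=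
  {x | ∃ f : Fin n → TruncatedWittVector p n L,
      (∀ s : Fin n, f s ∈ D.filKM p (r * p ^ (s : ℕ)) n) ∧
      x = ∑ s : Fin n, p ^ (s : ℕ) • f s}

end DVField

/-!
Write `F a = ∑ₛ pˢ fₛ` with `fₛ ∈ fil_{r pˢ}` and put `h = ∑ₛ pˢ f_{s+1}`. Since `F V = p`,
the vector `b = a - V h` has `F b = f₀`, and `R a = R b + ∑ₛ pˢ R V f_{s+1}`. Raising to the
`p`-th power multiplies valuations by `p`, so `R b ∈ fil^log_{r-1} ⊆ fil_r`; and `R V` moves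
every coordinate one place to the right, dividing its weight by `p`, so it maps `fil_{r p^{s+1}}`
into `fil_{r pˢ}`. The one non-formal input is that `fil^log` is closed under addition, i.e. the
weighted homogeneity of the Witt addition polynomials; it is obtained by scaling by the
Teichmüller representative of `X ^ c` over `L[X]` and using that Witt vectors with coordinates
in a subring form a subring.
-/
theorem WithTop.nsmul_top_of_ne_zero {α : Type*} [AddMonoid α] {N : ℕ} (hN : N ≠ 0) :
    N • (⊤ : WithTop α) = ⊤ := by
  obtain ⟨k, rfl⟩ := Nat.exists_eq_succ_of_ne_zero hN
  rw [succ_nsmul, WithTop.add_top]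

theorem neg_mul_le_nsmul_of_neg_le {c : ℕ} {x : WithTop ℤ}
    (h : ((-(c : ℤ) : ℤ) : WithTop ℤ) ≤ x) (k : ℕ) :
    ((-((c * k : ℕ) : ℤ) : ℤ) : WithTop ℤ) ≤ k • x := by
  refine le_trans (le_of_eq ?_) (nsmul_le_nsmul_right h k)
  rw [← WithTop.coe_nsmul, nsmul_eq_mul]
  congr 1
  push_cast
  ring

theorem neg_le_of_neg_le_nsmul {c d k : ℕ} (hc : c < k * (d + 1)) {x : WithTop ℤ}
    (h : ((-(c : ℤ) : ℤ) : WithTop ℤ) ≤ k • x) :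
    ((-(d : ℤ) : ℤ) : WithTop ℤ) ≤ x := by
  induction x with
  | top => exact le_top
  | coe t =>
    rw [← WithTop.coe_nsmul, WithTop.coe_le_coe, nsmul_eq_mul] at h
    rw [WithTop.coe_le_coe]
    by_contra! ht
    have hc' : (c : ℤ) < k * (d + 1) := by exact_mod_cast hc
    nlinarith

namespace DVField

variable {L : Type} [Field L] (D : DVField L)

theorem v_zero : D.v 0 = ⊤ := (D.v_top 0).2 rfl

theorem v_one : D.v 1 = 0 := by
  have h11 : D.v 1 = D.v 1 + D.v 1 := by rw [← D.v_mul, one_mul]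
  induction h : D.v 1 with
  | top => exact absurd ((D.v_top 1).1 h) one_ne_zero
  | coe a =>
    rw [h, ← WithTop.coe_add, WithTop.coe_inj] at h11
    exact congrArg _ (by omega)

def toAddValuation : AddValuation L (WithTop ℤ) :=
  AddValuation.of D.v D.v_zero D.v_one D.v_add D.v_mul

@[simp]
theorem toAddValuation_apply (x : L) : D.toAddValuation x = D.v x := rfl

def powSMulValuation (p : ℕ) [Fact p.Prime] (k : ℕ) : AddValuation L (WithTop ℤ) :=
  D.toAddValuation.map (nsmulAddMonoidHom (p ^ k))
    (WithTop.nsmul_top_of_ne_zero (pow_ne_zero k (Fact.out : p.Prime).ne_zero))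
    fun _ _ h => nsmul_le_nsmul_right h _

theorem powSMulValuation_apply (p : ℕ) [Fact p.Prime] (k : ℕ) (x : L) :
    D.powSMulValuation p k x = p ^ k • D.v x := rfl

end DVField

namespace WittVector

open MvPolynomial

variable {p : ℕ} [Fact p.Prime] {R S : Type*} [CommRing R] [CommRing S]

theorem ghostComponent_mk_pow_mul (u : R) (x : WittVector p R) (n : ℕ) :
    ghostComponent n (mk p fun i => u ^ p ^ i * x.coeff i) = u ^ p ^ n * ghostComponent n x := by
  rw [ghostComponent_apply, ghostComponent_apply, aeval_wittPolynomial, aeval_wittPolynomial,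
    Finset.mul_sum]
  refine Finset.sum_congr rfl fun i hi => ?_
  have hin : p ^ i * p ^ (n - i) = p ^ n := by
    rw [← pow_add, Nat.add_sub_cancel' (Finset.mem_range_succ_iff.1 hi)]
  rw [coeff_mk, mul_pow, ← pow_mul, hin]
  ring

theorem map_mk_pow_mul (f : R →+* S) (u : R) (x : WittVector p R) :
    map f (mk p fun i => u ^ p ^ i * x.coeff i) =
      mk p fun i => f u ^ p ^ i * (map f x).coeff i := by
  ext i
  simp [map_coeff]

theorem teichmuller_mul_eq_mk_of_invertible [Invertible (p : R)] (u : R) (x : WittVector p R) :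
    teichmuller p u * x = mk p fun i => u ^ p ^ i * x.coeff i := by
  apply (ghostMap.bijective_of_invertible p R).1
  ext1 n
  simp only [map_mul, ghostMap_apply, ghostComponent_mk_pow_mul,
    ghostComponent_teichmuller]

theorem teichmuller_mul_eq_mk_of_mvPolynomial {σ : Type*} (u : MvPolynomial σ ℤ)
    (x : WittVector p (MvPolynomial σ ℤ)) :
    teichmuller p u * x = mk p fun i => u ^ p ^ i * x.coeff i := by
  refine map_injective (MvPolynomial.map (Int.castRingHom ℚ))
    (MvPolynomial.map_injective _ Int.cast_injective) ?_
  rw [map_mul, map_teichmuller, map_mk_pow_mul, teichmuller_mul_eq_mk_of_invertible]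

theorem teichmuller_mul_coeff (u : R) (x : WittVector p R) (n : ℕ) :
    (teichmuller p u * x).coeff n = u ^ p ^ n * x.coeff n := by
  let x' : WittVector p (MvPolynomial R ℤ) := mk p fun i => X (x.coeff i)
  have hx' : map (counit R) x' = x := by
    ext i
    rw [map_coeff, coeff_mk, counit_X]
  rw [← counit_X (R := R) u, ← hx', ← map_teichmuller, ← map_mul,
    teichmuller_mul_eq_mk_of_mvPolynomial, map_mk_pow_mul, coeff_mk]

theorem mem_range_map_subtype_iff {B : Subring R} (x : WittVector p R) :
    x ∈ (map B.subtype).range ↔ ∀ i, x.coeff i ∈ B := by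
  constructor
  · rintro ⟨y, rfl⟩ i
    rw [map_coeff]
    exact (y.coeff i).2
  · intro h
    exact ⟨mk p fun i => ⟨x.coeff i, h i⟩, by ext i; rw [map_coeff, coeff_mk]; rfl⟩

end WittVector

namespace AddValuation

open Polynomial

variable {R : Type*} [CommRing R] (w : AddValuation R (WithTop ℤ))

/-- The polynomials that are integral for the Gauss valuation extending `w` with `w X = 1`. -/
def gaussSubring : Subring R[X] where
  carrier := {f | ∀ k : ℕ, ((-(k : ℤ) : ℤ) : WithTop ℤ) ≤ w (f.coeff k)}
  zero_mem' k := by simp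
  one_mem' k := by
    rw [coeff_one]
    split_ifs
    · rw [map_one]
      exact_mod_cast neg_nonpos.2 (Int.natCast_nonneg k)
    · simp
  add_mem' hf hg k := by
    rw [coeff_add]
    exact w.map_le_add (hf k) (hg k)
  neg_mem' hf k := by
    rw [coeff_neg, map_neg]
    exact hf k
  mul_mem' {f g} hf hg k := by
    rw [coeff_mul]
    refine w.map_le_sum fun ij hij => ?_
    rw [Finset.HasAntidiagonal.mem_antidiagonal] at hij
    calc ((-(k : ℤ) : ℤ) : WithTop ℤ)
        = ((-(ij.1 : ℤ) : ℤ) : WithTop ℤ) + ((-(ij.2 : ℤ) : ℤ) : WithTop ℤ) := by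
          rw [← WithTop.coe_add, ← hij]
          congr 1
          push_cast
          ring
      _ ≤ w (f.coeff ij.1 * g.coeff ij.2) := by
          rw [w.map_mul]
          exact add_le_add (hf ij.1) (hg ij.2)

theorem monomial_mem_gaussSubring_iff (k : ℕ) (a : R) :
    monomial k a ∈ w.gaussSubring ↔ ((-(k : ℤ) : ℤ) : WithTop ℤ) ≤ w a := by
  refine ⟨fun h => by simpa using h k, fun h j => ?_⟩
  rw [coeff_monomial]
  split_ifs with hkj
  · exact hkj ▸ h
  · simp

/-- After multiplication by the Teichmüller representative of `X ^ c`, the bounds say exactly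
that the coordinates lie in the subring `gaussSubring w`. -/
theorem neg_le_add_coeff {p : ℕ} [Fact p.Prime] {c : ℕ} {x y : WittVector p R}
    (hx : ∀ j, ((-((c * p ^ j : ℕ) : ℤ) : ℤ) : WithTop ℤ) ≤ w (x.coeff j))
    (hy : ∀ j, ((-((c * p ^ j : ℕ) : ℤ) : ℤ) : WithTop ℤ) ≤ w (y.coeff j)) (j : ℕ) :
    ((-((c * p ^ j : ℕ) : ℤ) : ℤ) : WithTop ℤ) ≤ w ((x + y).coeff j) := by
  have hmem : ∀ z : WittVector p R,
      (∀ j, ((-((c * p ^ j : ℕ) : ℤ) : ℤ) : WithTop ℤ) ≤ w (z.coeff j)) ↔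
        WittVector.teichmuller p (X ^ c) * WittVector.map C z ∈
          (WittVector.map w.gaussSubring.subtype).range := by
    intro z
    simp only [WittVector.mem_range_map_subtype_iff, WittVector.teichmuller_mul_coeff,
      WittVector.map_coeff, ← pow_mul, X_pow_mul_C, C_mul_X_pow_eq_monomial,
      monomial_mem_gaussSubring_iff]
  have hsum := add_mem ((hmem x).1 hx) ((hmem y).1 hy)
  rw [← mul_add, ← RingHom.map_add] at hsum
  exact (hmem (x + y)).2 hsum j

end AddValuation

section TruncatedOperators

open TruncatedWittVector

variable {p : ℕ} {L : Type} [Field L]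

theorem wVit_wVit {k m n : ℕ} (hkm : k ≤ m) (hmn : m ≤ n) (x : TruncatedWittVector p k L) :
    (wVit (wVit x : TruncatedWittVector p m L) : TruncatedWittVector p n L) = wVit x := by
  ext ⟨i, hi⟩
  simp only [wVit, coeff_mk]
  split_ifs <;> first | rfl | omega | (congr 1; ext; simp only; omega)

theorem wR_wV_wVit {m n : ℕ} (hm : 0 < m) (hmn : m ≤ n) (x : TruncatedWittVector p m L) :
    wR (wV (wVit x : TruncatedWittVector p n L)) =
      wVit (wRes x : TruncatedWittVector p (m - 1) L) := by
  ext ⟨i, hi⟩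
  simp only [wR, wV, wVit, wRes, coeff_mk, Fin.val_castSucc]
  split_ifs <;> first | rfl | omega | (congr 1; ext; simp only; omega)

variable [Fact p.Prime]

theorem wR_eq_truncate {n : ℕ} (x : TruncatedWittVector p (n + 1) L) :
    wR x = truncate n.le_succ x := by
  ext i
  rw [wR, coeff_mk, coeff_truncate]
  rfl

theorem wV_truncate {n : ℕ} (X : WittVector p L) :
    wV (WittVector.truncate n X) = WittVector.truncate (n + 1) (WittVector.verschiebung X) := by
  ext ⟨i, hi⟩
  rw [wV, coeff_mk, WittVector.coeff_truncate]
  cases i with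
  | zero => exact (WittVector.verschiebung_coeff_zero X).symm
  | succ j =>
    exact (WittVector.coeff_truncate X _).trans (WittVector.verschiebung_coeff_succ X j).symm

theorem wV_add {n : ℕ} (x y : TruncatedWittVector p n L) : wV (x + y) = wV x + wV y := by
  obtain ⟨X, rfl⟩ := WittVector.truncate_surjective p n L x
  obtain ⟨Y, rfl⟩ := WittVector.truncate_surjective p n L y
  simp only [← map_add, wV_truncate]

theorem wR_add {n : ℕ} (x y : TruncatedWittVector p (n + 1) L) : wR (x + y) = wR x + wR y := by
  simp only [wR_eq_truncate, map_add]

def wVHom (n : ℕ) : TruncatedWittVector p n L →+ TruncatedWittVector p (n + 1) L :=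
  AddMonoidHom.mk' wV wV_add

@[simp]
theorem wVHom_apply {n : ℕ} (x : TruncatedWittVector p n L) : wVHom n x = wV x := rfl

theorem wVit_truncate {m n : ℕ} (hmn : m ≤ n) (X : WittVector p L) :
    (wVit (WittVector.truncate m X) : TruncatedWittVector p n L) =
      WittVector.truncate n (WittVector.verschiebung^[n - m] X) := by
  ext ⟨i, hi⟩
  simp only [wVit, coeff_mk, WittVector.coeff_truncate]
  split_ifs with h
  · obtain ⟨j, rfl⟩ := Nat.exists_eq_add_of_le' h.1
    simp only [Nat.add_sub_cancel, WittVector.iterate_verschiebung_coeff]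
  · exact (WittVector.iterate_verschiebung_coeff_eq_zero X (by omega)).symm

theorem wVit_add {m n : ℕ} (hmn : m ≤ n) (x y : TruncatedWittVector p m L) :
    (wVit (x + y) : TruncatedWittVector p n L) = wVit x + wVit y := by
  obtain ⟨X, rfl⟩ := WittVector.truncate_surjective p m L x
  obtain ⟨Y, rfl⟩ := WittVector.truncate_surjective p m L y
  simp only [← map_add, wVit_truncate hmn, iterate_map_add]

theorem wVit_zero {m n : ℕ} :
    (wVit (0 : TruncatedWittVector p m L) : TruncatedWittVector p n L) = 0 := by
  ext i
  simp [wVit]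

variable [CharP L p]

theorem wF_truncate {n : ℕ} (X : WittVector p L) :
    wF (WittVector.truncate (n + 1) X) =
      WittVector.truncate n (WittVector.map (frobenius L p) X) := by
  ext i
  rw [wF, coeff_mk, WittVector.coeff_truncate, WittVector.coeff_truncate, WittVector.map_coeff,
    Fin.val_castSucc, frobenius_def]

theorem wF_sub {n : ℕ} (x y : TruncatedWittVector p (n + 1) L) : wF (x - y) = wF x - wF y := by
  obtain ⟨X, rfl⟩ := WittVector.truncate_surjective p (n + 1) L x
  obtain ⟨Y, rfl⟩ := WittVector.truncate_surjective p (n + 1) L y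
  simp only [← map_sub, wF_truncate]

theorem wF_wV {n : ℕ} (x : TruncatedWittVector p n L) : wF (wV x) = p • x := by
  obtain ⟨X, rfl⟩ := WittVector.truncate_surjective p n L x
  rw [wV_truncate, wF_truncate, ← WittVector.frobenius_eq_map_frobenius,
    WittVector.frobenius_verschiebung, map_mul, map_natCast, nsmul_eq_mul, mul_comm]

theorem wR_eq_of_wF_eq {n : ℕ} {x y : TruncatedWittVector p (n + 1) L} (h : wF x = wF y) :
    wR x = wR y := by
  ext i
  have hi := congrArg (coeff i) h
  simp only [wF, wR, coeff_mk] at hi ⊢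
  exact frobenius_inj L p hi

end TruncatedOperators

namespace DVField

open TruncatedWittVector

variable {L : Type} [Field L] (D : DVField L) {p : ℕ}

theorem filLog_mono {c c' n : ℕ} (hcc' : c ≤ c') : D.filLog p c n ⊆ D.filLog p c' n :=
  fun _ hx i => le_trans (by exact_mod_cast neg_le_neg (Int.ofNat_le.2 hcc')) (hx i)

variable [hp : Fact p.Prime]

theorem le_pow_nsmul_v_zero (c : WithTop ℤ) (k : ℕ) : c ≤ p ^ k • D.v 0 := by
  rw [v_zero, WithTop.nsmul_top_of_ne_zero (pow_ne_zero k hp.out.ne_zero)]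
  exact le_top

theorem zero_mem_filLog (c n : ℕ) : (0 : TruncatedWittVector p n L) ∈ D.filLog p c n := by
  intro i
  rw [coeff_zero]
  exact D.le_pow_nsmul_v_zero _ _

theorem neg_le_powSMulValuation_out_coeff {c n : ℕ} {x : TruncatedWittVector p n L}
    (hx : x ∈ D.filLog p c n) (j : ℕ) :
    ((-((c * p ^ j : ℕ) : ℤ) : ℤ) : WithTop ℤ) ≤
      D.powSMulValuation p (n - 1) (x.out.coeff j) := by
  rw [powSMulValuation_apply]
  by_cases hj : j < n
  · have hxj := neg_mul_le_nsmul_of_neg_le (hx ⟨j, hj⟩) (p ^ j)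
    rwa [← mul_nsmul, ← pow_add, Nat.sub_add_cancel (by omega), ← coeff_out] at hxj
  · have hzero : x.out.coeff j = 0 := by simp [TruncatedWittVector.out, hj]
    rw [hzero]
    exact D.le_pow_nsmul_v_zero _ _

/-- In terms of the valuation `p ^ (n - 1) • v`, the defining bounds of `fil^log_c` become the
bounds `-c p ^ j` of `AddValuation.neg_le_add_coeff`. -/
theorem add_mem_filLog {c n : ℕ} {x y : TruncatedWittVector p n L} (hx : x ∈ D.filLog p c n)
    (hy : y ∈ D.filLog p c n) : x + y ∈ D.filLog p c n := by
  intro i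
  have hxy := (D.powSMulValuation p (n - 1)).neg_le_add_coeff
    (D.neg_le_powSMulValuation_out_coeff hx) (D.neg_le_powSMulValuation_out_coeff hy) i
  rw [powSMulValuation_apply, show n - 1 = n - 1 - i + i by omega, pow_add, mul_nsmul] at hxy
  have hsum : x + y = WittVector.truncateFun n (x.out + y.out) := by
    rw [WittVector.truncateFun_add, truncateFun_out, truncateFun_out]
  rw [hsum, WittVector.coeff_truncateFun]
  exact neg_le_of_neg_le_nsmul (by nlinarith [pow_pos hp.out.pos (i : ℕ)]) hxy

theorem wVit_mem_filLog {c m n : ℕ} (hmn : m ≤ n) {x : TruncatedWittVector p m L}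
    (hx : x ∈ D.filLog p c m) : (wVit x : TruncatedWittVector p n L) ∈ D.filLog p c n := by
  intro i
  simp only [wVit, coeff_mk]
  split_ifs with h
  · have hxi := hx ⟨i - (n - m), h.2⟩
    rwa [show m - 1 - (i - (n - m)) = n - 1 - i by omega] at hxi
  · exact D.le_pow_nsmul_v_zero _ _

theorem wR_wV_mem_filLog {c d n : ℕ} (hcd : c < p * (d + 1)) {x : TruncatedWittVector p n L}
    (hx : x ∈ D.filLog p c n) : wR (wV x) ∈ D.filLog p d n := by
  intro i
  simp only [wR, wV, coeff_mk, Fin.val_castSucc]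
  split_ifs with h0
  · exact D.le_pow_nsmul_v_zero _ _
  · have hxi := hx ⟨i - 1, by omega⟩
    rw [show n - 1 - (i - 1) = n - 1 - i + 1 by omega, pow_succ, mul_nsmul] at hxi
    exact neg_le_of_neg_le_nsmul hcd hxi

theorem wRes_mem_filLog {c d m : ℕ} (hcd : c < p * (d + 1)) {x : TruncatedWittVector p m L}
    (hx : x ∈ D.filLog p c m) :
    (wRes x : TruncatedWittVector p (m - 1) L) ∈ D.filLog p d (m - 1) := by
  intro i
  simp only [wRes, coeff_mk]
  split_ifs with h
  · have hxi := hx ⟨i, h⟩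
    rw [show m - 1 - i = m - 1 - 1 - i + 1 by omega, pow_succ, mul_nsmul] at hxi
    exact neg_le_of_neg_le_nsmul hcd hxi
  · exact D.le_pow_nsmul_v_zero _ _

theorem mem_filKM_iff {r n : ℕ} (hr : r ≠ 0) {x : TruncatedWittVector p n L} :
    x ∈ D.filKM p r n ↔ ∃ a ∈ D.filLog p (r - 1) n,
      ∃ b ∈ D.filLog p r (min (padicValNat p r) n), x = a + wVit b := by
  rw [filKM, if_neg hr]
  rfl

theorem filKM_subset_filLog {r n : ℕ} (hr : r ≠ 0) : D.filKM p r n ⊆ D.filLog p r n := by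
  intro x hx
  obtain ⟨a, ha, b, hb, rfl⟩ := (D.mem_filKM_iff hr).1 hx
  exact D.add_mem_filLog (D.filLog_mono (Nat.sub_le r 1) ha)
    (D.wVit_mem_filLog (min_le_right _ _) hb)

theorem zero_mem_filKM {r n : ℕ} (hr : r ≠ 0) :
    (0 : TruncatedWittVector p n L) ∈ D.filKM p r n :=
  (D.mem_filKM_iff hr).2
    ⟨0, D.zero_mem_filLog _ _, 0, D.zero_mem_filLog _ _, by rw [wVit_zero, add_zero]⟩

theorem add_mem_filKM {r n : ℕ} (hr : r ≠ 0) {x y : TruncatedWittVector p n L}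
    (hx : x ∈ D.filKM p r n) (hy : y ∈ D.filKM p r n) : x + y ∈ D.filKM p r n := by
  obtain ⟨a, ha, b, hb, rfl⟩ := (D.mem_filKM_iff hr).1 hx
  obtain ⟨a', ha', b', hb', rfl⟩ := (D.mem_filKM_iff hr).1 hy
  refine (D.mem_filKM_iff hr).2
    ⟨a + a', D.add_mem_filLog ha ha', b + b', D.add_mem_filLog hb hb', ?_⟩
  rw [wVit_add (min_le_right _ _), add_add_add_comm]

/-- `F` raises coordinates to the `p`-th power, so the bound `r` on `F x` becomes the bound
`r / p ≤ r - 1` on `R x`, which therefore lies in `fil^log_{r-1}`. -/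
theorem wR_mem_filKM_of_wF_mem {r n : ℕ} (hr : r ≠ 0) {x : TruncatedWittVector p (n + 1) L}
    (hx : wF x ∈ D.filKM p r n) : wR x ∈ D.filKM p r n := by
  refine (D.mem_filKM_iff hr).2
    ⟨wR x, fun i => ?_, 0, D.zero_mem_filLog _ _, by rw [wVit_zero, add_zero]⟩
  have hxi := D.filKM_subset_filLog hr hx i
  simp only [wF, wR, coeff_mk] at hxi ⊢
  rw [← toAddValuation_apply, AddValuation.map_pow, toAddValuation_apply, smul_comm] at hxi
  refine neg_le_of_neg_le_nsmul ?_ hxi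
  rw [Nat.sub_add_cancel (Nat.one_le_iff_ne_zero.2 hr)]
  nlinarith [hp.out.two_le, Nat.pos_of_ne_zero hr]

theorem wR_wV_mem_filKM {r n : ℕ} (hn : 0 < n) (hr : r ≠ 0) (s : ℕ)
    {x : TruncatedWittVector p n L} (hx : x ∈ D.filKM p (r * p ^ (s + 1)) n) :
    wR (wV x) ∈ D.filKM p (r * p ^ s) n := by
  have hrp : ∀ t, r * p ^ t ≠ 0 := fun t => mul_ne_zero hr (pow_ne_zero t hp.out.ne_zero)
  have hval : ∀ t, padicValNat p (r * p ^ t) = padicValNat p r + t := fun t => by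
    rw [padicValNat.mul hr (pow_ne_zero t hp.out.ne_zero), padicValNat.prime_pow]
  have hm : 0 < min (padicValNat p (r * p ^ (s + 1))) n ∧
      min (padicValNat p (r * p ^ (s + 1))) n - 1 ≤ min (padicValNat p (r * p ^ s)) n := by
    rw [hval, hval]
    omega
  obtain ⟨a, ha, b, hb, rfl⟩ := (D.mem_filKM_iff (hrp (s + 1))).1 hx
  have hps : 0 < r * p ^ s := Nat.pos_of_ne_zero (hrp s)
  have hsucc : r * p ^ (s + 1) = r * p ^ s * p := by ring
  have hp2 := hp.out.two_le
  refine (D.mem_filKM_iff (hrp s)).2 ⟨wR (wV a), D.wR_wV_mem_filLog ?_ ha, _,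
    D.wVit_mem_filLog hm.2 (D.wRes_mem_filLog (c := r * p ^ (s + 1)) ?_ hb), ?_⟩
  · rw [Nat.sub_add_cancel hps, hsucc, mul_comm p]
    exact Nat.sub_lt (by positivity) one_pos
  · rw [hsucc]
    nlinarith
  · rw [wV_add, wR_add, wR_wV_wVit hm.1 (min_le_right _ _), wVit_wVit hm.2 (min_le_right _ _)]

theorem add_mem_FilP {r n : ℕ} (hr : r ≠ 0) {x y : TruncatedWittVector p n L}
    (hx : x ∈ D.FilP p r n) (hy : y ∈ D.FilP p r n) : x + y ∈ D.FilP p r n := by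
  obtain ⟨f, hf, rfl⟩ := hx
  obtain ⟨g, hg, rfl⟩ := hy
  refine ⟨f + g, fun s => D.add_mem_filKM ?_ (hf s) (hg s), ?_⟩
  · exact mul_ne_zero hr (pow_ne_zero _ hp.out.ne_zero)
  · simp only [Pi.add_apply, smul_add, Finset.sum_add_distrib]

theorem mem_FilP_of_mem_filKM {r n : ℕ} (hr : r ≠ 0) {x : TruncatedWittVector p (n + 1) L}
    (hx : x ∈ D.filKM p r (n + 1)) : x ∈ D.FilP p r (n + 1) := by
  refine ⟨Fin.cons x 0, Fin.cases (by simpa using hx) fun s => ?_, by simp [Fin.sum_univ_succ]⟩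
  simpa using D.zero_mem_filKM (mul_ne_zero hr (pow_ne_zero _ hp.out.ne_zero))

theorem sum_mem_FilP {r n : ℕ} (hr : r ≠ 0) {g : Fin n → TruncatedWittVector p (n + 1) L}
    (hg : ∀ t : Fin n, g t ∈ D.filKM p (r * p ^ (t : ℕ)) (n + 1)) :
    ∑ t : Fin n, p ^ (t : ℕ) • g t ∈ D.FilP p r (n + 1) := by
  refine ⟨Fin.snoc g 0, Fin.lastCases ?_ fun t => by simpa using hg t,
    by simp [Fin.sum_univ_castSucc]⟩
  simpa using D.zero_mem_filKM (mul_ne_zero hr (pow_ne_zero _ hp.out.ne_zero))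

end DVField

/-- (Weight-zero compatibility of the Cartier operator with the
`p`-saturated filtration.)  Let `n ≥ 1` and `r ≥ 2`.  If `a ∈ W_{n+1}(L)` satisfies
`F(a) ∈ Fil^p_r Wₙ(L)`, then `R(a) ∈ Fil^p_r Wₙ(L)`.  Consequently the Cartier operator
`C : F(W_{n+1}(L)) → Wₙ(L)`, `C(F(a)) = R(a)` (well defined, since `F a = F b` forces
`R a = R b` in a field of characteristic `p`), maps `F(W_{n+1}(L)) ∩ Fil^p_r Wₙ(L)` into
`Fil^p_r Wₙ(L)`. -/
theorem statement18 (p : ℕ) [Fact p.Prime] (L : Type) [Field L] [CharP L p]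
    (D : DVField L) (n r : ℕ) (hn : 1 ≤ n) (hr : 2 ≤ r) :
    (∀ a : TruncatedWittVector p (n + 1) L, wF a ∈ D.FilP p r n → wR a ∈ D.FilP p r n) ∧
    (∀ a b : TruncatedWittVector p (n + 1) L, wF a = wF b → wR a = wR b) := by
  refine ⟨fun a ha => ?_, fun a b => wR_eq_of_wF_eq⟩
  obtain ⟨n, rfl⟩ : ∃ m, n = m + 1 := ⟨n - 1, by omega⟩
  obtain ⟨f, hf, hFa⟩ := ha
  have hr0 : r ≠ 0 := by omega
  set h := ∑ t : Fin n, p ^ (t : ℕ) • f t.succ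
  have hFb : wF (a - wV h) = f 0 := by
    rw [wF_sub, wF_wV, hFa, Fin.sum_univ_succ, Finset.smul_sum]
    simp only [Fin.val_zero, pow_zero, one_smul, Fin.val_succ, pow_succ', mul_smul,
      add_sub_cancel_right]
  have hRVh : wR (wV h) = ∑ t : Fin n, p ^ (t : ℕ) • wR (wV (f t.succ)) := by
    simp only [h, wR_eq_truncate, ← wVHom_apply, map_sum, map_nsmul]
  rw [← sub_add_cancel a (wV h), wR_add, hRVh]
  refine D.add_mem_FilP hr0 (D.mem_FilP_of_mem_filKM hr0 (D.wR_mem_filKM_of_wF_mem hr0 ?_))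
    (D.sum_mem_FilP hr0 fun t => D.wR_wV_mem_filKM n.succ_pos hr0 t ?_)
  · simpa [hFb] using hf 0
  · simpa only [Fin.val_succ] using hf t.succ
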